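/- Let S be a nonempty finite set and 1 ≤ k < n integers, and let u : S^n → ℕ be counts of observed paths with total M = Σ_{x∈S^n} u_x > 0. For ℓ ∈ {k+1,…,n}, h ∈ S^k and j ∈ S, define the time-specific counts N^(ℓ)(h,j) = Σ_{x : (x_{ℓ−k},…,x_{ℓ−1}) = h, x_ℓ = j} u_x and D^(ℓ)(h) = Σ_{j∈S} N^(ℓ)(h,j), and the initial count c(w) = Σ_{x : (x_1,…,x_k) = w} u_x for w ∈ S^k. Let (π̂, â) be any stochastic nonhomogeneous parameter tuple such that π̂(w) = c(w)/M for all w ∈ S^k and â^(ℓ)(h,j) = N^(ℓ)(h,j)/D^(ℓ)(h) for every ℓ and every h ∈ S^k with D^(ℓ)(h) > 0. Then for every stochastic nonhomogeneous parameter tuple (π, a), the likelihood satisfies ∏_{x∈S^n} φ(π,a)_x^{u_x} ≤ ∏_{x∈S^n} φ(π̂,â)_x^{u_x}; that is, the empirical time-specific transition frequencies and the empirical initial distribution are the maximum likelihood estimators of the nonhomogeneous k-th order multistate Markov model parameters. -/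
import Mathlib

open MvPolynomial

namespace MSM

variable {S : Type*}

/-- First `k` entries of a path of length `n`. -/
def pathInit {n k : ℕ} (hk : k ≤ n) (x : Fin n → S) : Fin k → S :=
  fun i => x (Fin.castLE hk i)

/-- Length-`m` contiguous segment of a path starting at position `s` (0-indexed). -/
def seg {n : ℕ} (s m : ℕ) (h : s + m ≤ n) (x : Fin n → S) : Fin m → S :=
  fun t => x ⟨s + t.1, by have := t.isLt; omega⟩

/-- The contiguous window `(x_ℓ, …, x_{ℓ+k})` of length `k+1` starting at position `ℓ`
(0-indexed); these are the windows `(x_{ℓ-k},…,x_ℓ)`, `k+1 ≤ ℓ ≤ n`, in 1-indexed notation. -/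
def window {n k : ℕ} (hkn : k < n) (ℓ : Fin (n - k)) (x : Fin n → S) : Fin (k + 1) → S :=
  fun t => x ⟨ℓ.1 + t.1, by have := ℓ.isLt; have := t.isLt; omega⟩

/-- The nonhomogeneous `k`-th order multistate Markov parametrization `φ`. -/
def phi {n k : ℕ} (hkn : k < n) (pi : (Fin k → S) → ℝ)
    (a : Fin (n - k) → (Fin (k + 1) → S) → ℝ) : (Fin n → S) → ℝ :=
  fun x => pi (pathInit hkn.le x) * ∏ ℓ : Fin (n - k), a ℓ (window hkn ℓ x)

/-- The homogeneous `k`-th order multistate Markov parametrization `ψ`. -/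
def psi {n k : ℕ} (hkn : k < n) (pi : (Fin k → S) → ℝ)
    (a : (Fin (k + 1) → S) → ℝ) : (Fin n → S) → ℝ :=
  fun x => pi (pathInit hkn.le x) * ∏ ℓ : Fin (n - k), a (window hkn ℓ x)

/-- The vanishing ideal of a subset of `ℝ^{S^n}` inside `ℝ[p_x : x ∈ S^n]`. -/
noncomputable def vanishingIdeal {σ : Type*} (W : Set (σ → ℝ)) : Ideal (MvPolynomial σ ℝ) where
  carrier := { f | ∀ p ∈ W, MvPolynomial.eval p f = 0 }
  add_mem' := by
    intro f g hf hg p hp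
    simp only [Set.mem_setOf_eq] at *
    rw [map_add, hf p hp, hg p hp, add_zero]
  zero_mem' := by intro p hp; simp
  smul_mem' := by
    intro c f hf p hp
    simp only [Set.mem_setOf_eq] at *
    rw [smul_eq_mul, map_mul, hf p hp, mul_zero]

/-- Gibbs' inequality / weighted AM-GM: empirical frequencies maximize `∏ pᵢ^{cᵢ}`. -/
lemma gibbs {ι : Type*} [Fintype ι] (p : ι → ℝ) (hp : ∀ i, 0 ≤ p i)
    (hp1 : ∑ i, p i ≤ 1) (c : ι → ℕ) :
    ∏ i, p i ^ c i ≤ ∏ i, ((c i : ℝ) / (∑ j, c j : ℝ)) ^ c i := by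
  set M : ℕ := ∑ j, c j with hMdef
  by_cases hM : M = 0
  · have hc0 : ∀ i, c i = 0 := by
      intro i
      exact (Finset.sum_eq_zero_iff.mp hM) i (Finset.mem_univ i)
    simp [hc0]
  have hMpos : (0:ℝ) < M := by positivity
  set w : ι → ℝ := fun i => (c i : ℝ) / M with hw
  set z : ι → ℝ := fun i => p i * M / (c i : ℝ) with hz
  have hw0 : ∀ i ∈ Finset.univ, (0:ℝ) ≤ w i := fun i _ => by positivity
  have hw1 : ∑ i : ι, w i = 1 := by
    rw [hw]; rw [← Finset.sum_div]
    rw [show ∑ i : ι, (c i : ℝ) = (M : ℝ) by exact_mod_cast (Nat.cast_sum _ _).symm]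
    field_simp
  have hz0 : ∀ i ∈ Finset.univ, (0:ℝ) ≤ z i := fun i _ => by
    have := hp i; positivity
  have key := Real.geom_mean_le_arith_mean_weighted Finset.univ w z hw0 hw1 hz0
  have hsum : ∑ i : ι, w i * z i ≤ 1 := by
    refine le_trans ?_ hp1
    apply Finset.sum_le_sum
    intro i _
    rcases Nat.eq_zero_or_pos (c i) with h0 | h0
    · simp [hw, hz, h0]; exact hp i
    · have hci : (0:ℝ) < c i := by exact_mod_cast h0
      rw [hw, hz]
      rw [div_mul_div_comm]
      rw [div_le_iff₀ (by positivity)]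
      ring_nf
      nlinarith [hp i]
  have hzw1 : ∏ i : ι, z i ^ w i ≤ 1 := le_trans key hsum
  have hdecomp : ∀ i : ι, p i ^ w i = z i ^ w i * ((c i : ℝ)/M) ^ w i := by
    intro i
    rcases Nat.eq_zero_or_pos (c i) with h0 | h0
    · simp [hw, h0]
    · have hci : (0:ℝ) < c i := by exact_mod_cast h0
      rw [← Real.mul_rpow (by have := hp i; positivity) (by positivity)]
      congr 1
      rw [hz]
      field_simp
  have hA : ∏ i : ι, p i ^ w i ≤ ∏ i : ι, ((c i : ℝ)/M) ^ w i := by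
    calc ∏ i : ι, p i ^ w i = (∏ i : ι, z i ^ w i) * ∏ i : ι, ((c i : ℝ)/M) ^ w i := by
          rw [← Finset.prod_mul_distrib]; exact Finset.prod_congr rfl fun i _ => hdecomp i
      _ ≤ 1 * ∏ i : ι, ((c i : ℝ)/M) ^ w i := by
          apply mul_le_mul_of_nonneg_right hzw1
          apply Finset.prod_nonneg; intro i _
          apply Real.rpow_nonneg; positivity
      _ = _ := one_mul _
  have hpowA : (∏ i : ι, p i ^ w i) ^ M = ∏ i, p i ^ c i := by
    rw [← Finset.prod_pow]
    refine Finset.prod_congr rfl fun i _ => ?_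
    rw [← Real.rpow_natCast (p i ^ w i) M, ← Real.rpow_mul (hp i)]
    rw [hw, div_mul_cancel₀, Real.rpow_natCast]
    exact ne_of_gt hMpos
  have hpowB : (∏ i : ι, ((c i : ℝ)/M) ^ w i) ^ M = ∏ i, ((c i : ℝ)/M) ^ c i := by
    rw [← Finset.prod_pow]
    refine Finset.prod_congr rfl fun i _ => ?_
    rw [← Real.rpow_natCast (((c i : ℝ)/M) ^ w i) M, ← Real.rpow_mul (by positivity)]
    rw [hw, div_mul_cancel₀, Real.rpow_natCast]
    exact ne_of_gt hMpos
  calc ∏ i, p i ^ c i = (∏ i : ι, p i ^ w i) ^ M := hpowA.symm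
    _ ≤ (∏ i : ι, ((c i : ℝ)/M) ^ w i) ^ M := by
        apply pow_le_pow_left₀ _ hA
        apply Finset.prod_nonneg; intro i _; apply Real.rpow_nonneg (hp i)
    _ = ∏ i, ((c i : ℝ)/M) ^ c i := hpowB
    _ = ∏ i, ((c i : ℝ) / (∑ j, c j : ℝ)) ^ c i := by
        rw [show (∑ j : ι, (c j : ℝ)) = (M : ℝ) from (Nat.cast_sum _ _).symm]

/-- Group a product over `ι` by the fibers of `g`. -/
lemma group_prod {ι κ : Type*} [Fintype ι] [Fintype κ] [DecidableEq κ]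
    (g : ι → κ) (f : κ → ℝ) (u : ι → ℕ) :
    ∏ i, f (g i) ^ u i = ∏ v, f v ^ (∑ i, if g i = v then u i else 0) := by
  have : ∀ v : κ, f v ^ (∑ i, if g i = v then u i else 0)
      = ∏ i : ι, (if g i = v then f v ^ u i else 1) := by
    intro v
    rw [← Finset.prod_pow_eq_pow_sum]
    exact Finset.prod_congr rfl fun i _ => by split <;> simp
  simp_rw [this]
  rw [Finset.prod_comm]
  refine Finset.prod_congr rfl fun i _ => ?_
  simp

/-- The snoc equivalence `(Fin k → S) × S ≃ (Fin (k+1) → S)`. -/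
def snocE (k : ℕ) (S : Type*) : ((Fin k → S) × S) ≃ (Fin (k + 1) → S) where
  toFun p := Fin.snoc p.1 p.2
  invFun v := (Fin.init v, v (Fin.last k))
  left_inv p := by simp
  right_inv v := by simp [Fin.snoc_init_self]

/-- Factorization of the likelihood into initial and transition factors. -/
lemma likelihood_factor {S : Type*} [Fintype S] [DecidableEq S]
    {n k : ℕ} (hkn : k < n) (pi : (Fin k → S) → ℝ)
    (a : Fin (n - k) → (Fin (k + 1) → S) → ℝ) (u : (Fin n → S) → ℕ) :
    ∏ x : Fin n → S, phi hkn pi a x ^ u x =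
      (∏ w : Fin k → S, pi w ^ (∑ x : Fin n → S, if pathInit hkn.le x = w then u x else 0)) *
      ∏ ℓ : Fin (n - k), ∏ h : Fin k → S, ∏ j : S,
        a ℓ (Fin.snoc h j) ^ (∑ x : Fin n → S, if window hkn ℓ x = Fin.snoc h j then u x else 0) := by
  have step1 : ∏ x : Fin n → S, phi hkn pi a x ^ u x =
      (∏ x : Fin n → S, pi (pathInit hkn.le x) ^ u x) *
      ∏ ℓ : Fin (n - k), ∏ x : Fin n → S, a ℓ (window hkn ℓ x) ^ u x := by
    unfold phi
    simp_rw [mul_pow, Finset.prod_mul_distrib, ← Finset.prod_pow]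
    rw [Finset.prod_comm]
  rw [step1, group_prod (pathInit hkn.le) pi u]
  congr 1
  refine Finset.prod_congr rfl fun ℓ _ => ?_
  rw [group_prod (window hkn ℓ) (a ℓ) u]
  rw [← Equiv.prod_comp (snocE k S)
    (fun v => a ℓ v ^ (∑ x : Fin n → S, if window hkn ℓ x = v then u x else 0))]
  rw [Fintype.prod_prod_type]
  rfl

/-- The empirical time-specific transition frequencies and the empirical initial distribution
are the maximum likelihood estimators of the nonhomogeneous `k`-th order multistate Markov
model parameters: any stochastic tuple `(π̂, â)` given by `π̂(w) = c(w)/M` and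
`â^{(ℓ)}(h,j) = N^{(ℓ)}(h,j)/D^{(ℓ)}(h)` (whenever `D^{(ℓ)}(h) > 0`) maximizes the likelihood
over all stochastic parameter tuples. -/
theorem stmt18 (S : Type*) [Fintype S] [DecidableEq S] [Nonempty S]
    (n k : ℕ) (hk : 1 ≤ k) (hkn : k < n)
    (u : (Fin n → S) → ℕ) (hM : 0 < ∑ x : Fin n → S, u x)
    (N : Fin (n - k) → (Fin k → S) → S → ℕ)
    (hN : ∀ (ℓ : Fin (n - k)) (h : Fin k → S) (j : S), N ℓ h j =
      ∑ x : Fin n → S, if window hkn ℓ x = Fin.snoc h j then u x else 0)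
    (c : (Fin k → S) → ℕ)
    (hc : ∀ w : Fin k → S,
      c w = ∑ x : Fin n → S, if pathInit hkn.le x = w then u x else 0)
    (piHat : (Fin k → S) → ℝ) (aHat : Fin (n - k) → (Fin (k + 1) → S) → ℝ)
    (hpiHat0 : ∀ w, 0 ≤ piHat w) (hpiHat1 : (∑ w : Fin k → S, piHat w) = 1)
    (haHat0 : ∀ (ℓ : Fin (n - k)) (h : Fin k → S) (j : S), 0 ≤ aHat ℓ (Fin.snoc h j))
    (haHat1 : ∀ (ℓ : Fin (n - k)) (h : Fin k → S), (∑ j : S, aHat ℓ (Fin.snoc h j)) = 1)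
    (hpiHat : ∀ w, piHat w = (c w : ℝ) / (∑ x : Fin n → S, u x : ℝ))
    (haHat : ∀ (ℓ : Fin (n - k)) (h : Fin k → S) (j : S), 0 < ∑ j' : S, N ℓ h j' →
      aHat ℓ (Fin.snoc h j) = (N ℓ h j : ℝ) / (∑ j' : S, N ℓ h j' : ℝ)) :
    ∀ (pi : (Fin k → S) → ℝ) (a : Fin (n - k) → (Fin (k + 1) → S) → ℝ),
      (∀ w, 0 ≤ pi w) → (∑ w : Fin k → S, pi w) = 1 →
      (∀ (ℓ : Fin (n - k)) (h : Fin k → S) (j : S), 0 ≤ a ℓ (Fin.snoc h j)) →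
      (∀ (ℓ : Fin (n - k)) (h : Fin k → S), (∑ j : S, a ℓ (Fin.snoc h j)) = 1) →
      (∏ x : Fin n → S, phi hkn pi a x ^ u x)
        ≤ ∏ x : Fin n → S, phi hkn piHat aHat x ^ u x := by
  intro pi a hpi0 hpi1 ha0 ha1
  have hNc : ∀ (ℓ : Fin (n - k)) (h : Fin k → S) (j : S),
      (∑ x : Fin n → S, if window hkn ℓ x = Fin.snoc h j then u x else 0) = N ℓ h j :=
    fun ℓ h j => (hN ℓ h j).symm
  have hcc : ∀ w, (∑ x : Fin n → S, if pathInit hkn.le x = w then u x else 0) = c w :=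
    fun w => (hc w).symm
  rw [likelihood_factor hkn pi a u, likelihood_factor hkn piHat aHat u]
  simp_rw [hNc, hcc]
  -- total count identity
  have hMsum : ∑ w : Fin k → S, c w = ∑ x : Fin n → S, u x := by
    simp_rw [hc]
    rw [Finset.sum_comm]
    refine Finset.sum_congr rfl fun x _ => ?_
    simp
  -- initial part
  have hInit : ∏ w : Fin k → S, pi w ^ c w ≤ ∏ w : Fin k → S, piHat w ^ c w := by
    calc ∏ w : Fin k → S, pi w ^ c w
        ≤ ∏ w : Fin k → S, ((c w : ℝ) / (∑ w' : Fin k → S, (c w' : ℝ))) ^ c w :=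
          gibbs pi hpi0 hpi1.le c
      _ = ∏ w : Fin k → S, piHat w ^ c w := by
          refine Finset.prod_congr rfl fun w _ => ?_
          rw [hpiHat w]
          congr 2
          rw [← Nat.cast_sum, ← Nat.cast_sum, hMsum]
  -- transition part
  have hTrans : ∀ (ℓ : Fin (n - k)) (h : Fin k → S),
      ∏ j : S, a ℓ (Fin.snoc h j) ^ N ℓ h j ≤ ∏ j : S, aHat ℓ (Fin.snoc h j) ^ N ℓ h j := by
    intro ℓ h
    rcases Nat.eq_zero_or_pos (∑ j' : S, N ℓ h j') with hD | hD
    · have : ∀ j : S, N ℓ h j = 0 :=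
        fun j => (Finset.sum_eq_zero_iff.mp hD) j (Finset.mem_univ j)
      simp [this]
    · calc ∏ j : S, a ℓ (Fin.snoc h j) ^ N ℓ h j
          ≤ ∏ j : S, ((N ℓ h j : ℝ) / (∑ j' : S, (N ℓ h j' : ℝ))) ^ N ℓ h j :=
            gibbs (fun j => a ℓ (Fin.snoc h j)) (ha0 ℓ h) (ha1 ℓ h).le (N ℓ h)
        _ = ∏ j : S, aHat ℓ (Fin.snoc h j) ^ N ℓ h j := by
            refine Finset.prod_congr rfl fun j _ => ?_
            rw [haHat ℓ h j hD]
  -- combine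
  have hBnn : (0:ℝ) ≤ ∏ ℓ : Fin (n - k), ∏ h : Fin k → S, ∏ j : S,
      aHat ℓ (Fin.snoc h j) ^ N ℓ h j := by
    refine Finset.prod_nonneg fun ℓ _ => Finset.prod_nonneg fun h _ =>
      Finset.prod_nonneg fun j _ => pow_nonneg (haHat0 ℓ h j) _
  have hAnn : (0:ℝ) ≤ ∏ w : Fin k → S, pi w ^ c w :=
    Finset.prod_nonneg fun w _ => pow_nonneg (hpi0 w) _
  refine mul_le_mul hInit ?_ ?_ (Finset.prod_nonneg fun w _ => pow_nonneg (hpiHat0 w) _)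
  · refine Finset.prod_le_prod (fun ℓ _ => ?_) (fun ℓ _ => ?_)
    · exact Finset.prod_nonneg fun h _ =>
        Finset.prod_nonneg fun j _ => pow_nonneg (ha0 ℓ h j) _
    · refine Finset.prod_le_prod (fun h _ => ?_) (fun h _ => hTrans ℓ h)
      exact Finset.prod_nonneg fun j _ => pow_nonneg (ha0 ℓ h j) _
  · refine Finset.prod_nonneg fun ℓ _ => Finset.prod_nonneg fun h _ =>
      Finset.prod_nonneg fun j _ => pow_nonneg (ha0 ℓ h j) _

end MSM
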